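/- arXiv:2603.10953 — 6 statements merged into one kernel-verified Lean document; each statement's English description precedes it below -/
import Mathlib

section
/- For any integers n, k ≥ 1 with n = qk + r and 0 ≤ r < k, the maximum number of edges in a K_{k+1}-free simple graph on n vertices equals ((k-1)/(2k))·n² − r(k−r)/(2k). -/
/-!
By Turán's theorem (`isTuranMaximal_turanGraph`) the Turán graph `T(n, k)` is edge-maximal among
`K_{k+1}`-free graphs on `n` vertices. Its edge count `(n² - r²)(k - 1) / (2k) + C(r, 2)`
(`card_edgeFinset_turanGraph`, with `r = n % k`) involves an exact division, since
`n² - r² = qk(qk + 2r)`, and over `ℚ` it rearranges to `(k - 1) n² / (2k) - r (k - r) / (2k)`.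
-/

open SimpleGraph Finset

namespace SimpleGraph

theorem ncard_edgeSet {V : Type*} (G : SimpleGraph V) [Fintype G.edgeSet] :
    G.edgeSet.ncard = #G.edgeFinset := by
  rw [← coe_edgeFinset, Set.ncard_coe_finset]

theorem cast_card_edgeFinset_turanGraph {n k : ℕ} (hk : 0 < k) :
    (#(turanGraph n k).edgeFinset : ℚ) =
      ((k : ℚ) - 1) / (2 * k) * n ^ 2 - (n % k : ℕ) * ((k : ℚ) - (n % k : ℕ)) / (2 * k) := by
  rw [card_edgeFinset_turanGraph]
  set q := n / k
  set r := n % k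
  have hn : q * k + r = n := by rw [mul_comm]; exact Nat.div_add_mod n k
  have hsq : n ^ 2 - r ^ 2 = q * k * (q * k + 2 * r) :=
    Nat.sub_eq_of_eq_add (by rw [← hn]; ring)
  have hdvd : 2 * k ∣ (n ^ 2 - r ^ 2) * (k - 1) := by
    refine ⟨q * r * (k - 1) + q ^ 2 * k.choose 2, Nat.cast_injective (R := ℚ) ?_⟩
    push_cast [hsq, Nat.cast_sub hk, Nat.cast_choose_two]
    ring
  rw [Nat.cast_add, Nat.cast_div_charZero hdvd, Nat.cast_choose_two, hsq, ← hn]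
  push_cast [Nat.cast_sub hk]
  field_simp
  ring

end SimpleGraph

theorem turan_max_edges_general (n k q r : ℕ) (hk : 1 ≤ k)
    (hqr : n = q * k + r) (hrk : r < k) :
    IsGreatest {m : ℚ | ∃ G : SimpleGraph (Fin n), G.CliqueFree (k + 1) ∧
        m = (G.edgeSet.ncard : ℚ)}
      (((k : ℚ) - 1) / (2 * k) * n ^ 2 - (r * ((k : ℚ) - r)) / (2 * k)) := by
  have hr : n % k = r := by rw [hqr, Nat.mul_add_mod_self_right, Nat.mod_eq_of_lt hrk]
  rw [← hr, ← cast_card_edgeFinset_turanGraph hk]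
  refine ⟨⟨turanGraph n k, turanGraph_cliqueFree hk, by rw [ncard_edgeSet]⟩, ?_⟩
  rintro _ ⟨G, hG, rfl⟩
  classical
  rw [ncard_edgeSet]
  exact_mod_cast (isTuranMaximal_turanGraph hk).2 hG

theorem turan_max_edges (n k q r : ℕ) (hn : 1 ≤ n) (hk : 1 ≤ k)
    (hqr : n = q * k + r) (hrk : r < k) :
    IsGreatest {m : ℚ | ∃ G : SimpleGraph (Fin n), G.CliqueFree (k + 1) ∧
        m = (G.edgeSet.ncard : ℚ)}
      (((k : ℚ) - 1) / (2 * k) * n ^ 2 - (r * ((k : ℚ) - r)) / (2 * k)) :=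
  turan_max_edges_general n k q r hk hqr hrk
end

section
/- Among all tournaments on n vertices, the transitive tournament maximizes the sum of squares of outdegrees, and this maximum equals n(n−1)(2n−1)/6. -/
/-!
In an oriented graph (no 2-cycles) a vertex `v` together with `k` of its out-neighbours spans a
`(k + 1)`-set in which `v` is the only vertex dominating all the others, so
`∑ v, (d v).choose k ≤ n.choose (k + 1)`. Writing `d ^ 2 = 2 * d.choose 2 + d` then gives
`∑ v, d v ^ 2 ≤ 2 * n.choose 3 + n.choose 2 = ∑ i < n, i ^ 2`, the value attained by the
transitive tournament, whose outdegrees are `n - 1, …, 1, 0`.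
-/

open Finset

theorem Nat.sq_eq_two_mul_choose_two_add (m : ℕ) : m ^ 2 = 2 * m.choose 2 + m := by
  rw [Nat.choose_two_right, Nat.mul_div_cancel' (Nat.even_mul_pred_self m).two_dvd]
  cases m <;> simp [sq, Nat.mul_succ]

theorem Nat.sum_range_choose_eq_choose_succ (n k : ℕ) :
    ∑ i ∈ range n, i.choose k = n.choose (k + 1) := by
  induction n with
  | zero => simp
  | succ n ih => rw [sum_range_succ, ih, Nat.choose_succ_succ', add_comm]

theorem Nat.sum_range_sq_eq_choose (n : ℕ) :
    ∑ i ∈ range n, i ^ 2 = 2 * n.choose 3 + n.choose 2 := by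
  rw [sum_congr rfl fun i _ => Nat.sq_eq_two_mul_choose_two_add i, sum_add_distrib, ← mul_sum,
    Nat.sum_range_choose_eq_choose_succ, sum_range_id, Nat.choose_two_right]

theorem Nat.six_mul_sum_range_sq (n : ℕ) :
    6 * ∑ i ∈ range n, i ^ 2 = n * (n - 1) * (2 * n - 1) := by
  rw [Nat.sum_range_sq_eq_choose]
  obtain _ | _ | n := n
  · rfl
  · rfl
  have h3 := Nat.descFactorial_eq_factorial_mul_choose (n + 2) 3
  have h2 := Nat.descFactorial_eq_factorial_mul_choose (n + 2) 2
  norm_num [Nat.descFactorial, Nat.factorial] at h3 h2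
  rw [show 2 * (n + 2) - 1 = 2 * n + 3 by omega, Nat.add_sub_cancel]
  linarith

section OrientedGraph

variable {α : Type*} [Fintype α] (r : α → α → Prop) [DecidableRel r]

theorem sum_choose_card_filter_le (hr : ∀ u v, r u v → ¬ r v u) (k : ℕ) :
    ∑ v, (#{w | r v w}).choose k ≤ (Fintype.card α).choose (k + 1) := by
  classical
  have notMem : ∀ {v} {s : Finset α}, s ⊆ ({w | r v w} : Finset α) → v ∉ s := fun hs hv =>
    hr _ _ (mem_filter.1 (hs hv)).2 (mem_filter.1 (hs hv)).2
  calc ∑ v, (#{w | r v w}).choose k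
      = #(univ.sigma fun v => powersetCard k {w | r v w}) := by simp [card_sigma]
    _ ≤ #(powersetCard (k + 1) (univ : Finset α)) := by
        refine card_le_card_of_injOn (fun p => insert p.1 p.2) ?_ ?_
        · rintro ⟨v, s⟩ hs
          simp only [coe_sigma, Set.mem_sigma_iff, coe_univ, Set.mem_univ, mem_coe,
            mem_powersetCard, true_and] at hs ⊢
          exact ⟨subset_univ _, by rw [card_insert_of_notMem (notMem hs.1), hs.2]⟩
        · rintro ⟨v, s⟩ hs ⟨v', s'⟩ hs' heq
          simp only [coe_sigma, Set.mem_sigma_iff, coe_univ, Set.mem_univ, mem_coe,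
            mem_powersetCard, true_and] at hs hs' heq
          obtain rfl : v = v' := by
            by_contra hne
            have hv' : v' ∈ s :=
              (mem_insert.1 (heq ▸ mem_insert_self v' s' : v' ∈ insert v s)).resolve_left
                (Ne.symm hne)
            have hv : v ∈ s' :=
              (mem_insert.1 (heq ▸ mem_insert_self v s : v ∈ insert v' s')).resolve_left hne
            exact hr v v' (mem_filter.1 (hs.1 hv')).2 (mem_filter.1 (hs'.1 hv)).2
          rw [← erase_insert (notMem hs.1), ← erase_insert (notMem hs'.1), heq]
    _ = (Fintype.card α).choose (k + 1) := by simp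

theorem sum_sq_card_filter_le (hr : ∀ u v, r u v → ¬ r v u) :
    ∑ v, #{w | r v w} ^ 2 ≤ ∑ i ∈ range (Fintype.card α), i ^ 2 := by
  rw [Nat.sum_range_sq_eq_choose]
  simp only [Nat.sq_eq_two_mul_choose_two_add, sum_add_distrib, ← mul_sum]
  gcongr
  · exact sum_choose_card_filter_le r hr 2
  · simpa using sum_choose_card_filter_le r hr 1

end OrientedGraph

theorem Fin.sum_sq_card_filter_lt (n : ℕ) :
    ∑ v : Fin n, #{w | v < w} ^ 2 = ∑ i ∈ range n, i ^ 2 := by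
  simp only [filter_lt_eq_Ioi, Fin.card_Ioi]
  rw [Fin.sum_univ_eq_sum_range (fun i => (n - 1 - i) ^ 2) n]
  exact sum_range_reflect (· ^ 2) n

theorem transitive_tournament_max_zagreb (n : ℕ) :
    IsGreatest {m : ℕ | ∃ T : Fin n → Fin n → Bool,
        (∀ v, T v v = false) ∧ (∀ u v : Fin n, u ≠ v → T u v = !T v u) ∧
        m = ∑ v : Fin n, ((univ.filter fun w : Fin n => T v w = true).card) ^ 2}
      (∑ v : Fin n, ((univ.filter fun w : Fin n => v < w).card) ^ 2) ∧
    6 * ∑ v : Fin n, ((univ.filter fun w : Fin n => v < w).card) ^ 2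
      = n * (n - 1) * (2 * n - 1) := by
  refine ⟨⟨⟨fun v w => decide (v < w), fun v => by simp, fun u v huv => ?_, by simp⟩, ?_⟩,
    ?_⟩
  · rcases huv.lt_or_gt with h | h <;> simp [h, h.le]
  · rintro m ⟨T, hirrefl, hflip, rfl⟩
    have hasymm : ∀ u v, T u v = true → ¬ T v u = true := by
      intro u v huv hvu
      rcases eq_or_ne u v with rfl | hne
      · simp_all
      · simp_all [hflip u v hne]
    rw [Fin.sum_sq_card_filter_lt]
    simpa using sum_sq_card_filter_le (fun u v => T u v = true) hasymm
  · rw [Fin.sum_sq_card_filter_lt, Nat.six_mul_sum_range_sq]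
end

section
/- The maximum Laplacian energy over all C⃗₂-free digraphs on n vertices equals n(n−1)(2n−1)/6, attained uniquely by the transitive tournament. -/
open Finset

/-- Outdegree of a vertex in a digraph given by a Boolean adjacency function. -/
def outdeg {n : ℕ} (D : Fin n → Fin n → Bool) (v : Fin n) : ℕ :=
  (univ.filter fun w : Fin n => D v w = true).card

/-- Number of directed closed walks of length 2 (ordered pairs of opposite arcs). -/
def c2 {n : ℕ} (D : Fin n → Fin n → Bool) : ℕ :=
  (univ.filter fun p : Fin n × Fin n => D p.1 p.2 = true ∧ D p.2 p.1 = true).card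

/-- Laplacian energy of a digraph: sum of squared outdegrees plus `c2`. -/
def lapEnergy {n : ℕ} (D : Fin n → Fin n → Bool) : ℕ :=
  (∑ v : Fin n, (outdeg D v) ^ 2) + c2 D

/-! ### Auxiliary definitions -/

def arcs {n : ℕ} (D : Fin n → Fin n → Bool) : Finset (Fin n × Fin n) :=
  univ.filter fun p => D p.1 p.2 = true

def cherries {n : ℕ} (D : Fin n → Fin n → Bool) : Finset (Fin n × Fin n × Fin n) :=
  univ.filter fun t => D t.1 t.2.1 = true ∧ D t.1 t.2.2 = true ∧ t.2.1 ≠ t.2.2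

def indeg {n : ℕ} (D : Fin n → Fin n → Bool) (v : Fin n) : ℕ :=
  (univ.filter fun w : Fin n => D w v = true).card

section lemmas
variable {n : ℕ} {D : Fin n → Fin n → Bool}

/-! ### Counting identities -/

lemma sum_outdeg (D : Fin n → Fin n → Bool) :
    ∑ v : Fin n, outdeg D v = (arcs D).card := by
  rw [card_eq_sum_card_fiberwise (f := Prod.fst) (t := univ) (fun x _ => mem_univ _)]
  refine sum_congr rfl fun v _ => ?_
  rw [outdeg]
  refine card_bij (fun w _ => (v, w)) ?_ ?_ ?_
  · intro w hw; simp only [mem_filter, mem_univ, true_and] at hw ⊢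
    simp [arcs, hw]
  · intro a _ b _ h; simpa using congrArg Prod.snd h
  · intro p hp; simp only [arcs, mem_filter, mem_univ, true_and] at hp
    exact ⟨p.2, by simp [← hp.2, hp.1], by simp [← hp.2]⟩

lemma sum_outdeg_mul (D : Fin n → Fin n → Bool) :
    ∑ v : Fin n, outdeg D v * (outdeg D v - 1) = (cherries D).card := by
  rw [card_eq_sum_card_fiberwise (f := Prod.fst) (t := univ) (fun x _ => mem_univ _)]
  refine sum_congr rfl fun v _ => ?_
  have : outdeg D v * (outdeg D v - 1)
      = ((univ.filter fun w : Fin n => D v w = true).offDiag).card := by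
    rw [offDiag_card, outdeg]; cases (univ.filter fun w : Fin n => D v w = true).card with
    | zero => simp
    | succ k => simp [Nat.succ_sub_one, Nat.succ_mul, Nat.mul_succ]
  rw [this]
  refine card_bij (fun q _ => (v, q)) ?_ ?_ ?_
  · intro q hq
    simp only [mem_offDiag, mem_filter, mem_univ, true_and] at hq
    simp [cherries, hq.1, hq.2.1, hq.2.2]
  · intro a _ b _ h; simpa using congrArg Prod.snd h
  · intro t ht
    simp only [cherries, mem_filter, mem_univ, true_and] at ht
    obtain ⟨⟨ha, hb, hc⟩, h1⟩ := ht
    subst h1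
    exact ⟨t.2, by simp only [mem_offDiag, mem_filter, mem_univ, true_and]; exact ⟨ha, hb, hc⟩, rfl⟩

lemma sum_sq_outdeg (D : Fin n → Fin n → Bool) :
    ∑ v : Fin n, (outdeg D v) ^ 2 = (arcs D).card + (cherries D).card := by
  rw [← sum_outdeg, ← sum_outdeg_mul, ← Finset.sum_add_distrib]
  refine sum_congr rfl fun v _ => ?_
  cases outdeg D v with
  | zero => simp
  | succ k => simp only [Nat.succ_sub_one]; ring

/-! ### Fiberwise decompositions and bounds -/

lemma arc_ne (h1 : ∀ v, D v v = false) {p : Fin n × Fin n} (hp : p ∈ arcs D) : p.1 ≠ p.2 := by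
  intro h
  simp only [arcs, mem_filter, mem_univ, true_and] at hp
  rw [h, h1] at hp; exact Bool.false_ne_true hp

lemma arcs_mapsTo (h1 : ∀ v, D v v = false) :
    ∀ p ∈ arcs D, ({p.1, p.2} : Finset (Fin n)) ∈ powersetCard 2 (univ : Finset (Fin n)) := by
  intro p hp
  rw [mem_powersetCard]
  exact ⟨subset_univ _, card_pair (arc_ne h1 hp)⟩

lemma arcs_card_eq (h1 : ∀ v, D v v = false) :
    (arcs D).card = ∑ b ∈ powersetCard 2 (univ : Finset (Fin n)),
      ((arcs D).filter fun p => ({p.1, p.2} : Finset (Fin n)) = b).card :=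
  card_eq_sum_card_fiberwise (arcs_mapsTo h1)

lemma arcs_fiber_le (h1 : ∀ v, D v v = false)
    (h2 : ∀ u v : Fin n, ¬(D u v = true ∧ D v u = true)) (b : Finset (Fin n)) :
    ((arcs D).filter fun p => ({p.1, p.2} : Finset (Fin n)) = b).card ≤ 1 := by
  rcases ((arcs D).filter fun p => ({p.1, p.2} : Finset (Fin n)) = b).eq_empty_or_nonempty with
    he | ⟨p, hp⟩
  · simp [he]
  · refine le_trans (card_le_card ?_) (by simp : ({p} : Finset (Fin n × Fin n)).card ≤ 1)
    intro q hq
    simp only [mem_filter] at hp hq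
    have hb : ({q.1, q.2} : Finset (Fin n)) = {p.1, p.2} := by rw [hq.2, hp.2]
    have hq1 : q.1 ∈ ({p.1, p.2} : Finset (Fin n)) := by rw [← hb]; simp
    have hq2 : q.2 ∈ ({p.1, p.2} : Finset (Fin n)) := by rw [← hb]; simp
    have hpe := arc_ne h1 hp.1
    have hqe := arc_ne h1 hq.1
    simp only [mem_insert, mem_singleton] at hq1 hq2
    have hqa : D q.1 q.2 = true := by
      have := hq.1; simpa [arcs] using this
    have hpa : D p.1 p.2 = true := by
      have := hp.1; simpa [arcs] using this
    rcases hq1 with h | h <;> rcases hq2 with h' | h'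
    · exact absurd (h.trans h'.symm) hqe
    · simp [Prod.ext_iff, h, h']
    · exact absurd ⟨hpa, by rw [← h, ← h']; exact hqa⟩ (h2 p.1 p.2)
    · exact absurd (h.trans h'.symm) hqe

lemma cherry_mapsTo (h1 : ∀ v, D v v = false) :
    ∀ t ∈ cherries D, ({t.1, t.2.1, t.2.2} : Finset (Fin n)) ∈
      powersetCard 3 (univ : Finset (Fin n)) := by
  intro t ht
  simp only [cherries, mem_filter, mem_univ, true_and] at ht
  obtain ⟨ha, hb, hc⟩ := ht
  have e1 : t.1 ≠ t.2.1 := fun h => by rw [← h, h1] at ha; exact Bool.false_ne_true ha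
  have e2 : t.1 ≠ t.2.2 := fun h => by rw [← h, h1] at hb; exact Bool.false_ne_true hb
  rw [mem_powersetCard]
  refine ⟨subset_univ _, ?_⟩
  rw [card_insert_of_notMem (by simp [e1, e2]), card_pair hc]

lemma cherries_card_eq (h1 : ∀ v, D v v = false) :
    (cherries D).card = ∑ b ∈ powersetCard 3 (univ : Finset (Fin n)),
      ((cherries D).filter fun t => ({t.1, t.2.1, t.2.2} : Finset (Fin n)) = b).card :=
  card_eq_sum_card_fiberwise (cherry_mapsTo h1)

lemma cherry_fiber_le (h1 : ∀ v, D v v = false)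
    (h2 : ∀ u v : Fin n, ¬(D u v = true ∧ D v u = true)) (b : Finset (Fin n)) :
    ((cherries D).filter fun t => ({t.1, t.2.1, t.2.2} : Finset (Fin n)) = b).card ≤ 2 := by
  rcases ((cherries D).filter fun t => ({t.1, t.2.1, t.2.2} : Finset (Fin n)) = b).eq_empty_or_nonempty
    with he | ⟨t, ht⟩
  · simp [he]
  · refine le_trans (card_le_card (?_ : _ ⊆ ({t, (t.1, t.2.2, t.2.1)} : Finset _)))
      (le_trans (card_insert_le _ _) (by simp))
    intro s hs
    simp only [mem_filter] at ht hs
    have hbeq : ({s.1, s.2.1, s.2.2} : Finset (Fin n)) = {t.1, t.2.1, t.2.2} := by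
      rw [hs.2, ht.2]
    simp only [cherries, mem_filter, mem_univ, true_and] at ht hs
    obtain ⟨⟨ta, tb, tc⟩, _⟩ := ht
    obtain ⟨⟨sa, sb, sc⟩, _⟩ := hs
    have smem : ∀ x ∈ ({s.1, s.2.1, s.2.2} : Finset (Fin n)),
        x ∈ ({t.1, t.2.1, t.2.2} : Finset (Fin n)) := fun x hx => hbeq ▸ hx
    have tmem : ∀ x ∈ ({t.1, t.2.1, t.2.2} : Finset (Fin n)),
        x ∈ ({s.1, s.2.1, s.2.2} : Finset (Fin n)) := fun x hx => hbeq ▸ hx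
    have hst : s.1 = t.1 := by
      by_contra hne
      have hs1 : s.1 ∈ ({t.1, t.2.1, t.2.2} : Finset (Fin n)) := smem s.1 (by simp)
      have ht1 : t.1 ∈ ({s.1, s.2.1, s.2.2} : Finset (Fin n)) := tmem t.1 (by simp)
      simp only [mem_insert, mem_singleton] at hs1 ht1
      have hts : D t.1 s.1 = true := by
        rcases hs1 with h | h | h
        · exact absurd h hne
        · rw [h]; exact ta
        · rw [h]; exact tb
      have hst' : D s.1 t.1 = true := by
        rcases ht1 with h | h | h
        · exact absurd h.symm hne
        · rw [h]; exact sa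
        · rw [h]; exact sb
      exact h2 t.1 s.1 ⟨hts, hst'⟩
    have f1 : s.1 ≠ s.2.1 := fun h => by rw [← h, h1] at sa; exact Bool.false_ne_true sa
    have f2 : s.1 ≠ s.2.2 := fun h => by rw [← h, h1] at sb; exact Bool.false_ne_true sb
    have hm1 : s.2.1 ∈ ({t.1, t.2.1, t.2.2} : Finset (Fin n)) := smem s.2.1 (by simp)
    have hm2 : s.2.2 ∈ ({t.1, t.2.1, t.2.2} : Finset (Fin n)) := smem s.2.2 (by simp)
    simp only [mem_insert, mem_singleton] at hm1 hm2
    have hm1' : s.2.1 = t.2.1 ∨ s.2.1 = t.2.2 := by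
      rcases hm1 with h | h | h
      · exact absurd (h.trans hst.symm).symm f1
      · exact Or.inl h
      · exact Or.inr h
    have hm2' : s.2.2 = t.2.1 ∨ s.2.2 = t.2.2 := by
      rcases hm2 with h | h | h
      · exact absurd (h.trans hst.symm).symm f2
      · exact Or.inl h
      · exact Or.inr h
    simp only [mem_insert, mem_singleton]
    rcases hm1' with h | h <;> rcases hm2' with h' | h'
    · exact absurd (h.trans h'.symm) sc
    · exact Or.inl (Prod.ext hst (Prod.ext h h'))
    · exact Or.inr (Prod.ext hst (Prod.ext h h'))
    · exact absurd (h.trans h'.symm) sc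

/-! ### c2 vanishes -/

lemma c2_eq_zero (h2 : ∀ u v : Fin n, ¬(D u v = true ∧ D v u = true)) : c2 D = 0 := by
  rw [c2, Finset.card_eq_zero, Finset.filter_eq_empty_iff]
  exact fun p _ => h2 p.1 p.2

/-! ### Arithmetic -/

lemma two_choose (n : ℕ) : 2 * n.choose 2 = n * (n - 1) := by
  induction n with
  | zero => simp
  | succ m ih =>
    rw [Nat.choose_succ_succ]
    cases m with
    | zero => simp
    | succ k =>
      simp only [Nat.succ_sub_one] at ih ⊢
      rw [Nat.mul_add, ih, Nat.choose_one_right]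
      ring

lemma choose_sum_eq (n : ℕ) : 6 * (n.choose 2 + 2 * n.choose 3) = n * (n - 1) * (2 * n - 1) := by
  induction n with
  | zero => simp
  | succ m ih =>
    rw [Nat.choose_succ_succ m 2, Nat.choose_succ_succ m 1]
    have h2 := two_choose m
    cases m with
    | zero => simp
    | succ k =>
      simp only [Nat.succ_sub_one, Nat.choose_one_right,
        show 2 * (k + 1) - 1 = 2 * k + 1 by omega,
        show 2 * (k + 1 + 1) - 1 = 2 * k + 3 by omega] at ih h2 ⊢
      have key : 6 * (k + 1) + ((k + 1) * k * (2 * k + 1) + 6 * ((k + 1) * k))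
          = (k + 1 + 1) * (k + 1) * (2 * k + 3) := by ring
      linarith [ih, h2, key]

lemma sumsq (n : ℕ) : 6 * ∑ i ∈ Finset.range n, i ^ 2 = n * (n - 1) * (2 * n - 1) := by
  induction n with
  | zero => simp
  | succ m ih =>
    rw [Finset.sum_range_succ, Nat.mul_add, ih]
    cases m with
    | zero => simp
    | succ k =>
      simp only [Nat.succ_sub_one,
        show 2 * (k + 1) - 1 = 2 * k + 1 by omega,
        show 2 * (k + 1 + 1) - 1 = 2 * k + 3 by omega]
      ring

/-! ### Transitive tournament -/

lemma tt_energy (n : ℕ) :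
    lapEnergy (fun u v : Fin n => decide (u < v)) = ∑ i ∈ Finset.range n, i ^ 2 := by
  have hc : c2 (fun u v : Fin n => decide (u < v)) = 0 :=
    c2_eq_zero (by intro u v h; simp at h; exact absurd (h.1.trans h.2) (lt_irrefl u))
  rw [lapEnergy, hc, Nat.add_zero]
  have hout : ∀ v : Fin n, outdeg (fun u v : Fin n => decide (u < v)) v = n - 1 - v.val := by
    intro v
    rw [outdeg]
    have : (univ.filter fun w : Fin n => decide (v < w) = true) = Finset.Ioi v := by
      ext w; simp [Finset.mem_Ioi]
    rw [this, Fin.card_Ioi]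
  simp only [hout]
  rw [Fin.sum_univ_eq_sum_range (fun i => (n - 1 - i) ^ 2) n]
  exact Finset.sum_range_reflect (fun i => i ^ 2) n

/-! ### From a transitive tournament to an order isomorphism -/

lemma indeg_lt (h1 : ∀ v, D v v = false) (u : Fin n) : indeg D u < n := by
  have : (univ.filter fun w : Fin n => D w u = true) ⊆ univ.erase u := by
    intro w hw
    simp only [mem_filter, mem_univ, true_and] at hw
    refine Finset.mem_erase.2 ⟨fun h => ?_, mem_univ _⟩
    rw [h, h1] at hw; exact Bool.false_ne_true hw
  calc indeg D u ≤ (univ.erase u).card := Finset.card_le_card this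
    _ < n := by
        rw [Finset.card_erase_of_mem (mem_univ _), Finset.card_univ, Fintype.card_fin]
        have := u.pos; omega

lemma arc_iff_indeg (h1 : ∀ v, D v v = false)
    (htour : ∀ u v : Fin n, u ≠ v → D u v = true ∨ D v u = true)
    (htrans : ∀ u v w : Fin n, D u v = true → D v w = true → D u w = true)
    (u v : Fin n) : D u v = true ↔ indeg D u < indeg D v := by
  have fwd : ∀ a b : Fin n, D a b = true → indeg D a < indeg D b := by
    intro a b hab
    have hsub : insert a (univ.filter fun w : Fin n => D w a = true)
        ⊆ univ.filter fun w : Fin n => D w b = true := by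
      intro w hw
      rcases Finset.mem_insert.1 hw with rfl | hw
      · simp [hab]
      · simp only [mem_filter, mem_univ, true_and] at hw ⊢
        exact htrans w a b hw hab
    have hnot : a ∉ (univ.filter fun w : Fin n => D w a = true) := by
      simp [h1 a]
    calc indeg D a < (insert a (univ.filter fun w : Fin n => D w a = true)).card := by
          rw [indeg, Finset.card_insert_of_notMem hnot]; omega
      _ ≤ indeg D b := Finset.card_le_card hsub
  constructor
  · exact fwd u v
  · intro hlt
    have hne : u ≠ v := fun h => by rw [h] at hlt; omega
    rcases htour u v hne with h | h
    · exact h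
    · exact absurd (fwd v u h) (by omega)

end lemmas

theorem max_lapEnergy_c2free (n : ℕ) :
    IsGreatest {m : ℕ | ∃ D : Fin n → Fin n → Bool, (∀ v, D v v = false) ∧
        (∀ u v : Fin n, ¬(D u v = true ∧ D v u = true)) ∧ m = lapEnergy D}
      (n * (n - 1) * (2 * n - 1) / 6) ∧
    ∀ D : Fin n → Fin n → Bool, (∀ v, D v v = false) →
      (∀ u v : Fin n, ¬(D u v = true ∧ D v u = true)) →
      lapEnergy D = n * (n - 1) * (2 * n - 1) / 6 →
      ∃ e : Fin n ≃ Fin n, ∀ u v : Fin n, D u v = decide (e u < e v) := by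
  have hdiv : n * (n - 1) * (2 * n - 1) / 6 = n.choose 2 + 2 * n.choose 3 :=
    Nat.div_eq_of_eq_mul_right (by norm_num) (choose_sum_eq n).symm
  have hsum : ∑ i ∈ Finset.range n, i ^ 2 = n.choose 2 + 2 * n.choose 3 := by
    have h1 := sumsq n
    have h2 := choose_sum_eq n
    omega
  -- upper bound pieces, for any admissible D
  have harcs_le : ∀ (D : Fin n → Fin n → Bool), (∀ v, D v v = false) →
      (∀ u v : Fin n, ¬(D u v = true ∧ D v u = true)) → (arcs D).card ≤ n.choose 2 := by
    intro D h1 h2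
    rw [arcs_card_eq h1]
    calc ∑ b ∈ powersetCard 2 (univ : Finset (Fin n)),
          ((arcs D).filter fun p => ({p.1, p.2} : Finset (Fin n)) = b).card
        ≤ ∑ _b ∈ powersetCard 2 (univ : Finset (Fin n)), 1 :=
          Finset.sum_le_sum fun b _ => arcs_fiber_le h1 h2 b
      _ = n.choose 2 := by
          rw [Finset.sum_const, smul_eq_mul, mul_one, card_powersetCard, card_univ,
            Fintype.card_fin]
  have hch_le : ∀ (D : Fin n → Fin n → Bool), (∀ v, D v v = false) →
      (∀ u v : Fin n, ¬(D u v = true ∧ D v u = true)) → (cherries D).card ≤ 2 * n.choose 3 := by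
    intro D h1 h2
    rw [cherries_card_eq h1]
    calc ∑ b ∈ powersetCard 3 (univ : Finset (Fin n)),
          ((cherries D).filter fun t => ({t.1, t.2.1, t.2.2} : Finset (Fin n)) = b).card
        ≤ ∑ _b ∈ powersetCard 3 (univ : Finset (Fin n)), 2 :=
          Finset.sum_le_sum fun b _ => cherry_fiber_le h1 h2 b
      _ = 2 * n.choose 3 := by
          rw [Finset.sum_const, smul_eq_mul, card_powersetCard, card_univ, Fintype.card_fin]
          ring
  have hub : ∀ (D : Fin n → Fin n → Bool), (∀ v, D v v = false) →
      (∀ u v : Fin n, ¬(D u v = true ∧ D v u = true)) →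
      lapEnergy D ≤ n.choose 2 + 2 * n.choose 3 := by
    intro D h1 h2
    rw [lapEnergy, c2_eq_zero h2, Nat.add_zero, sum_sq_outdeg]
    exact Nat.add_le_add (harcs_le D h1 h2) (hch_le D h1 h2)
  refine ⟨⟨⟨fun u v : Fin n => decide (u < v), ?_, ?_, ?_⟩, ?_⟩, ?_⟩
  · intro v; simp
  · intro u v h; simp only [decide_eq_true_eq] at h; exact absurd (h.1.trans h.2) (lt_irrefl u)
  · rw [tt_energy, hsum, hdiv]
  · rintro m ⟨D, h1, h2, rfl⟩
    rw [hdiv]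
    exact hub D h1 h2
  -- equality case
  intro D h1 h2 heq
  rw [hdiv] at heq
  rw [lapEnergy, c2_eq_zero h2, Nat.add_zero, sum_sq_outdeg] at heq
  have harc_eq : (arcs D).card = n.choose 2 := by
    have := harcs_le D h1 h2; have := hch_le D h1 h2; omega
  have hch_eq : (cherries D).card = 2 * n.choose 3 := by
    have := harcs_le D h1 h2; have := hch_le D h1 h2; omega
  -- tournament property
  have htour : ∀ u v : Fin n, u ≠ v → D u v = true ∨ D v u = true := by
    intro u v hne
    have hbmem : ({u, v} : Finset (Fin n)) ∈ powersetCard 2 (univ : Finset (Fin n)) :=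
      mem_powersetCard.2 ⟨subset_univ _, card_pair hne⟩
    have hfib : ∀ b ∈ powersetCard 2 (univ : Finset (Fin n)),
        ((arcs D).filter fun p => ({p.1, p.2} : Finset (Fin n)) = b).card = 1 := by
      have hsumeq : ∑ b ∈ powersetCard 2 (univ : Finset (Fin n)),
          ((arcs D).filter fun p => ({p.1, p.2} : Finset (Fin n)) = b).card
          = ∑ _b ∈ powersetCard 2 (univ : Finset (Fin n)), 1 := by
        rw [← arcs_card_eq h1, harc_eq, Finset.sum_const, smul_eq_mul, mul_one,
          card_powersetCard, card_univ, Fintype.card_fin]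
      exact fun b hb =>
        (Finset.sum_eq_sum_iff_of_le fun b _ => arcs_fiber_le h1 h2 b).1 hsumeq b hb
    have hpos : 0 < ((arcs D).filter fun p =>
        ({p.1, p.2} : Finset (Fin n)) = ({u, v} : Finset (Fin n))).card := by
      rw [hfib _ hbmem]; omega
    obtain ⟨p, hp⟩ := Finset.card_pos.1 hpos
    simp only [mem_filter] at hp
    have hpa : D p.1 p.2 = true := by have := hp.1; simpa [arcs] using this
    have hp1 : p.1 ∈ ({u, v} : Finset (Fin n)) := by rw [← hp.2]; simp
    have hp2 : p.2 ∈ ({u, v} : Finset (Fin n)) := by rw [← hp.2]; simp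
    have hpe := arc_ne h1 hp.1
    simp only [mem_insert, mem_singleton] at hp1 hp2
    rcases hp1 with h | h <;> rcases hp2 with h' | h'
    · exact absurd (h.trans h'.symm) hpe
    · left; rw [← h, ← h']; exact hpa
    · right; rw [← h, ← h']; exact hpa
    · exact absurd (h.trans h'.symm) hpe
  -- transitivity
  have htrans : ∀ u v w : Fin n, D u v = true → D v w = true → D u w = true := by
    intro u v w huv hvw
    have huv' : u ≠ v := fun h => by rw [h, h1] at huv; exact Bool.false_ne_true huv
    have hvw' : v ≠ w := fun h => by rw [h, h1] at hvw; exact Bool.false_ne_true hvw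
    have huw' : u ≠ w := fun h => h2 u v ⟨huv, by rw [← h] at hvw; exact hvw⟩
    have hbmem : ({u, v, w} : Finset (Fin n)) ∈ powersetCard 3 (univ : Finset (Fin n)) := by
      refine mem_powersetCard.2 ⟨subset_univ _, ?_⟩
      rw [card_insert_of_notMem (by simp [huv', huw']), card_pair hvw']
    have hfib : ∀ b ∈ powersetCard 3 (univ : Finset (Fin n)),
        ((cherries D).filter fun t => ({t.1, t.2.1, t.2.2} : Finset (Fin n)) = b).card = 2 := by
      have hsumeq : ∑ b ∈ powersetCard 3 (univ : Finset (Fin n)),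
          ((cherries D).filter fun t => ({t.1, t.2.1, t.2.2} : Finset (Fin n)) = b).card
          = ∑ _b ∈ powersetCard 3 (univ : Finset (Fin n)), 2 := by
        rw [← cherries_card_eq h1, hch_eq, Finset.sum_const, smul_eq_mul,
          card_powersetCard, card_univ, Fintype.card_fin]
        ring
      exact fun b hb =>
        (Finset.sum_eq_sum_iff_of_le fun b _ => cherry_fiber_le h1 h2 b).1 hsumeq b hb
    have hpos : 0 < ((cherries D).filter fun t =>
        ({t.1, t.2.1, t.2.2} : Finset (Fin n)) = ({u, v, w} : Finset (Fin n))).card := by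
      rw [hfib _ hbmem]; omega
    obtain ⟨t, ht⟩ := Finset.card_pos.1 hpos
    simp only [mem_filter, cherries, mem_univ, true_and] at ht
    obtain ⟨⟨ta, tb, _⟩, hset⟩ := ht
    have hdom : ∀ x ∈ ({u, v, w} : Finset (Fin n)), x ≠ t.1 → D t.1 x = true := by
      intro x hx hne
      rw [← hset] at hx
      simp only [mem_insert, mem_singleton] at hx
      rcases hx with h | h | h
      · exact absurd h hne
      · rw [h]; exact ta
      · rw [h]; exact tb
    have ht1 : t.1 ∈ ({u, v, w} : Finset (Fin n)) := by rw [← hset]; simp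
    simp only [mem_insert, mem_singleton] at ht1
    rcases ht1 with h | h | h
    · -- t.1 = u : u dominates w
      refine h ▸ hdom w (by simp) ?_
      rw [h]; exact huw'.symm
    · -- t.1 = v : v dominates u, contradiction with u → v
      exact absurd ⟨huv, h ▸ hdom u (by simp) (by rw [h]; exact huv')⟩ (h2 u v)
    · -- t.1 = w : w dominates v, contradiction with v → w
      exact absurd ⟨hvw, h ▸ hdom v (by simp) (by rw [h]; exact hvw')⟩ (h2 v w)
  -- build the equivalence from indegrees
  have hiff := arc_iff_indeg h1 htour htrans
  have hinj : Function.Injective (fun u : Fin n => (⟨indeg D u, indeg_lt h1 u⟩ : Fin n)) := by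
    intro a b hab
    by_contra hne
    have hv : indeg D a = indeg D b := by simpa [Fin.ext_iff] using hab
    rcases htour a b hne with h | h
    · have := (hiff a b).1 h; omega
    · have := (hiff b a).1 h; omega
  have hbij := Finite.injective_iff_bijective.1 hinj
  refine ⟨Equiv.ofBijective _ hbij, fun u v => ?_⟩
  have happ : ∀ u : Fin n, Equiv.ofBijective _ hbij u = (⟨indeg D u, indeg_lt h1 u⟩ : Fin n) :=
    fun u => rfl
  rw [happ, happ]
  rcases hD : D u v with _ | _
  · symm
    simp only [decide_eq_false_iff_not, Fin.lt_def]
    intro hlt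
    rw [(hiff u v).2 hlt] at hD
    exact Bool.noConfusion hD
  · symm
    simp only [decide_eq_true_eq, Fin.lt_def]
    exact (hiff u v).1 hD
end

section
/- Let k,n ∈ ℕ⁺ with n = qk + r, 0 < r < k. For s = 0,…,q, the digraph F^{s+1}_{n,k} has outdegree sequence consisting of the values n−1−(i−1)k each with multiplicity k for i = 1,…,s, the value n−1−sk with multiplicity r, and the values n−1−(i−2)k−r each with multiplicity k for i = s+2,…,q+1; and the sum of this sequence is independent of s, equal to (n² + (k−2)n − r(k−r))/2. -/
/-!
Every part of `F^{s+1}_{n,k}` is an interval of vertices and every arc leaves a part towards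
itself or a later part, so the out-neighbourhood of `v` is everything from the first vertex of
`v`'s part onwards, except `v` itself: the outdegree of `v` is `n - 1 - partStart v`. Reading
these values off part by part gives the sequence, and its sum is a sum of two arithmetic
progressions.
-/

open Finset

/-- Index of the part containing vertex `v` in the digraph `F^{s+1}_{n,k}`
(`s` parts of size `k`, then one part of size `r`, then parts of size `k`). -/
def partIdx (k r s v : ℕ) : ℕ :=
  if v < s * k then v / k
  else if v < s * k + r then s
  else s + 1 + (v - s * k - r) / k

/-- The prescribed outdegree multiset of `F^{s+1}_{n,k}`. -/
def outMultiset (n k q r s : ℕ) : Multiset ℕ :=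
  (Finset.range s).val.bind (fun i => Multiset.replicate k (n - 1 - i * k))
    + Multiset.replicate r (n - 1 - s * k)
    + (Finset.range (q - s)).val.bind (fun i => Multiset.replicate k (n - 1 - (s + i) * k - r))

def partStart (k r s v : ℕ) : ℕ :=
  if v < s * k then v / k * k
  else if v < s * k + r then s * k
  else s * k + r + (v - s * k - r) / k * k

section PartStart

variable {k r s : ℕ}

lemma partStart_le (v : ℕ) : partStart k r s v ≤ v := by
  unfold partStart
  split_ifs
  · exact Nat.div_mul_le_self v k
  · omega
  · have := Nat.div_mul_le_self (v - s * k - r) k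
    omega

lemma partIdx_mono (hk : 0 < k) : Monotone (partIdx k r s) := by
  intro a b hab
  unfold partIdx
  split_ifs with ha
  · exact Nat.div_le_div_right hab
  · exact ((Nat.div_lt_iff_lt_mul hk).2 ha).le
  · exact ((Nat.div_lt_iff_lt_mul hk).2 ha).le.trans (le_add_right s.le_succ)
  · omega
  · exact le_rfl
  · exact le_add_right s.le_succ
  · omega
  · omega
  · exact Nat.add_le_add_left (Nat.div_le_div_right (by omega)) _

lemma partIdx_partStart (hk : 0 < k) (v : ℕ) :
    partIdx k r s (partStart k r s v) = partIdx k r s v := by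
  by_cases h₁ : v < s * k
  · have hlt : v / k * k < s * k := (Nat.div_mul_le_self v k).trans_lt h₁
    simp only [partStart, partIdx, if_pos h₁, if_pos hlt]
    exact Nat.mul_div_cancel _ hk
  by_cases h₂ : v < s * k + r
  · simp only [partStart, partIdx, if_neg h₁, if_pos h₂, lt_irrefl, if_false]
    rw [if_pos (by omega)]
  · simp only [partStart, partIdx, if_neg h₁, if_neg h₂]
    rw [if_neg (by omega), if_neg (by omega),
      show s * k + r + (v - s * k - r) / k * k - s * k - r = (v - s * k - r) / k * k by omega,
      Nat.mul_div_cancel _ hk]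

lemma partIdx_lt_of_lt_partStart (hk : 0 < k) {v w : ℕ} (hw : w < partStart k r s v) :
    partIdx k r s w < partIdx k r s v := by
  unfold partStart at hw
  unfold partIdx
  split_ifs at hw with h₁ h₂
  · rw [if_pos (hw.trans_le ((Nat.div_mul_le_self v k).trans h₁.le)), if_pos h₁]
    exact (Nat.div_lt_iff_lt_mul hk).2 hw
  · rw [if_pos hw, if_neg h₁, if_pos h₂]
    exact (Nat.div_lt_iff_lt_mul hk).2 hw
  · rw [if_neg h₁, if_neg h₂]
    split_ifs with hw₁ hw₂
    · exact ((Nat.div_lt_iff_lt_mul hk).2 hw₁).trans_le (le_add_right s.le_succ)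
    · exact s.lt_succ_self.trans_le (Nat.le_add_right _ _)
    · exact Nat.add_lt_add_left ((Nat.div_lt_iff_lt_mul hk).2 (by omega)) _

lemma partIdx_le_partIdx_iff (hk : 0 < k) {v w : ℕ} :
    partIdx k r s v ≤ partIdx k r s w ↔ partStart k r s v ≤ w := by
  refine ⟨fun h => ?_, fun h => ?_⟩
  · by_contra! hw
    exact (partIdx_lt_of_lt_partStart hk hw).not_ge h
  · rw [← partIdx_partStart hk v]
    exact partIdx_mono hk h

end PartStart

lemma Fin.card_filter_le_val (n b : ℕ) : #{w : Fin n | b ≤ (w : ℕ)} = n - b := by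
  have h := card_filter_add_card_filter_not (s := (univ : Finset (Fin n))) (fun w => (w : ℕ) < b)
  simp only [not_lt, Fin.card_filter_val_lt, card_univ, Fintype.card_fin] at h
  omega

lemma card_outNeighbours_eq {n k r s : ℕ} (hk : 0 < k) (v : Fin n) :
    #{w : Fin n | v ≠ w ∧ partIdx k r s ↑v ≤ partIdx k r s ↑w} = n - 1 - partStart k r s v := by
  have hv : v ∈ ({w : Fin n | partStart k r s v ≤ (w : ℕ)} : Finset (Fin n)) := by
    simpa using partStart_le (v : ℕ)
  have hset : ({w : Fin n | v ≠ w ∧ partIdx k r s ↑v ≤ partIdx k r s ↑w} : Finset (Fin n)) =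
      ({w : Fin n | partStart k r s v ≤ (w : ℕ)} : Finset (Fin n)).erase v := by
    ext w
    simp only [mem_filter, mem_erase, mem_univ, true_and, partIdx_le_partIdx_iff hk]
    tauto
  rw [hset, card_erase_of_mem hv, Fin.card_filter_le_val]
  omega

lemma Fin.univ_val_map_val {α : Type*} (n : ℕ) (f : ℕ → α) :
    (univ : Finset (Fin n)).val.map (fun v : Fin n => f v) = (Multiset.range n).map f := by
  have h := congrArg Finset.val ((Fin.map_valEmbedding_univ (n := n)).trans (Nat.Iio_eq_range n))
  rw [Finset.map_val, Finset.range_val] at h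
  rw [← h, Multiset.map_map]
  rfl

lemma Multiset.map_range_mul_div {α : Type*} {k : ℕ} (hk : 0 < k) (g : ℕ → α) (t : ℕ) :
    (Multiset.range (t * k)).map (fun v => g (v / k)) =
      (Multiset.range t).bind fun i => Multiset.replicate k (g i) := by
  induction t with
  | zero => simp
  | succ t ih =>
    have hblock : (Multiset.range k).map (fun j => g ((t * k + j) / k)) =
        Multiset.replicate k (g t) := by
      have hconst : ∀ j ∈ Multiset.range k, g ((t * k + j) / k) = g t := fun j hj => by
        rw [Nat.add_comm, Nat.add_mul_div_right _ _ hk, Nat.div_eq_of_lt (Multiset.mem_range.mp hj),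
          Nat.zero_add]
      rw [Multiset.map_congr rfl hconst, Multiset.map_const', Multiset.card_range]
    rw [Nat.succ_mul, Multiset.range_add, Multiset.map_add, ih, Multiset.map_map,
      Multiset.range_succ, Multiset.cons_bind, add_comm]
    exact congrArg (· + _) hblock

lemma map_range_partStart_eq_outMultiset {n k q r s : ℕ} (hk : 0 < k) (hqr : n = q * k + r)
    (hs : s ≤ q) :
    (Multiset.range n).map (fun v => n - 1 - partStart k r s v) = outMultiset n k q r s := by
  obtain ⟨m, rfl⟩ : ∃ m, q = s + m := ⟨q - s, by omega⟩
  have hsplit : Multiset.range n = Multiset.range (s * k) +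
      (Multiset.range r).map (s * k + ·) + (Multiset.range (m * k)).map (s * k + r + ·) := by
    rw [show n = s * k + r + m * k by rw [hqr]; ring, Multiset.range_add, Multiset.range_add]
  have hfirst : ∀ v ∈ Multiset.range (s * k), n - 1 - partStart k r s v = n - 1 - v / k * k :=
    fun v hv => by rw [partStart, if_pos (Multiset.mem_range.mp hv)]
  have hmiddle : ∀ j ∈ Multiset.range r, n - 1 - partStart k r s (s * k + j) = n - 1 - s * k :=
    fun j hj => by
      rw [partStart, if_neg (by omega), if_pos (by simp at hj; omega)]
  have hlast : ∀ u ∈ Multiset.range (m * k),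
      n - 1 - partStart k r s (s * k + r + u) = n - 1 - (s + u / k) * k - r := fun u hu => by
    rw [partStart, if_neg (by omega), if_neg (by omega),
      show s * k + r + u - s * k - r = u by omega, add_mul]
    omega
  rw [outMultiset, range_val, range_val, Nat.add_sub_cancel_left,
    ← Multiset.map_range_mul_div hk, ← Multiset.map_range_mul_div hk,
    ← Multiset.card_range r, ← Multiset.map_const', hsplit, Multiset.map_add, Multiset.map_add,
    Multiset.map_map, Multiset.map_map, Multiset.card_range]
  exact congrArg₂ (· + ·)
    (congrArg₂ (· + ·) (Multiset.map_congr rfl hfirst) (Multiset.map_congr rfl hmiddle))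
    (Multiset.map_congr rfl hlast)

lemma Multiset.sum_bind_replicate {ι M : Type*} [AddCommMonoid M] (t : Finset ι) (k : ℕ)
    (f : ι → M) : (t.val.bind fun i => Multiset.replicate k (f i)).sum = k • ∑ i ∈ t, f i := by
  rw [Multiset.sum_bind, Finset.smul_sum]
  simp only [Multiset.sum_replicate]
  rfl

lemma two_mul_sum_range_sub_mul {R : Type*} [CommRing R] (a d : R) (t : ℕ) :
    2 * ∑ i ∈ range t, (a - i * d) = t * (2 * a - (t - 1) * d) := by
  induction t with
  | zero => simp
  | succ t ih =>
    rw [sum_range_succ, mul_add, ih]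
    push_cast
    ring

lemma two_mul_sum_outMultiset {n k q r s : ℕ} (hk : 0 < k) (hr : 0 < r) (hqr : n = q * k + r)
    (hs : s ≤ q) :
    2 * ((outMultiset n k q r s).sum : ℤ) = n ^ 2 + (k - 2) * n - r * (k - r) := by
  obtain ⟨m, rfl⟩ : ∃ m, q = s + m := ⟨q - s, by omega⟩
  have hfirst : ∀ i ∈ range s, ((n - 1 - i * k : ℕ) : ℤ) = (n - 1 : ℤ) - i * k := fun i hi => by
    have : (i + 1) * k ≤ (s + m) * k := Nat.mul_le_mul_right _ (by simp at hi; omega)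
    rw [add_mul] at this
    omega
  have hmiddle : ((n - 1 - s * k : ℕ) : ℤ) = n - 1 - s * k := by
    have : s * k ≤ (s + m) * k := Nat.mul_le_mul_right _ (by omega)
    omega
  have hlast : ∀ i ∈ range m,
      ((n - 1 - (s + i) * k - r : ℕ) : ℤ) = (n - 1 - s * k - r : ℤ) - i * k := fun i hi => by
    have : (s + i + 1) * k ≤ (s + m) * k := Nat.mul_le_mul_right _ (by simp at hi; omega)
    rw [add_mul, add_mul] at this
    rw [add_mul]
    omega
  rw [outMultiset, Multiset.sum_add, Multiset.sum_add, Multiset.sum_bind_replicate,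
    Multiset.sum_bind_replicate, Multiset.sum_replicate, Nat.add_sub_cancel_left, smul_eq_mul,
    smul_eq_mul, smul_eq_mul]
  push_cast
  rw [sum_congr rfl hfirst, hmiddle, sum_congr rfl hlast]
  have h₁ := two_mul_sum_range_sub_mul ((n : ℤ) - 1) k s
  have h₂ := two_mul_sum_range_sub_mul ((n : ℤ) - 1 - s * k - r) k m
  subst hqr
  push_cast at h₁ h₂ ⊢
  linear_combination (k : ℤ) * h₁ + (k : ℤ) * h₂

theorem F_outdegree_sequence_general (n k q r : ℕ)
    (hqr : n = q * k + r) (hr0 : 0 < r) (hrk : r < k) (s : ℕ) (hs : s ≤ q) :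
    (Finset.univ.val.map (fun v : Fin n =>
        (univ.filter fun w : Fin n => v ≠ w ∧ partIdx k r s ↑v ≤ partIdx k r s ↑w).card)
      = outMultiset n k q r s) ∧
    2 * (outMultiset n k q r s).sum + r * (k - r) = n ^ 2 + (k - 2) * n := by
  have hk : 0 < k := hr0.trans hrk
  refine ⟨?_, ?_⟩
  · simp_rw [card_outNeighbours_eq hk]
    rw [Fin.univ_val_map_val n (fun v => n - 1 - partStart k r s v)]
    exact map_range_partStart_eq_outMultiset hk hqr hs
  · have hsum := two_mul_sum_outMultiset hk hr0 hqr hs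
    zify [hrk.le, show 2 ≤ k by omega]
    push_cast at hsum
    linarith

theorem F_outdegree_sequence (n k q r : ℕ) (hn : 1 ≤ n) (hk : 1 ≤ k)
    (hqr : n = q * k + r) (hr0 : 0 < r) (hrk : r < k) (s : ℕ) (hs : s ≤ q) :
    (Finset.univ.val.map (fun v : Fin n =>
        (univ.filter fun w : Fin n => v ≠ w ∧ partIdx k r s ↑v ≤ partIdx k r s ↑w).card)
      = outMultiset n k q r s) ∧
    2 * (outMultiset n k q r s).sum + r * (k - r) = n ^ 2 + (k - 2) * n :=
  F_outdegree_sequence_general n k q r hqr hr0 hrk s hs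
end

section
/- Let k,n ∈ ℕ⁺ with n = qk + r, 0 < r < k, and let 0 ≤ s₂ < s₁ ≤ q. Then the nonincreasing outdegree sequence of F^{s₁+1}_{n,k} majorizes that of F^{s₂+1}_{n,k}: for every t with 1 ≤ t ≤ n, the sum of the t largest outdegrees of F^{s₂+1}_{n,k} is at most that of F^{s₁+1}_{n,k}, with equality of total sums when t = n. -/
/-!
Passing from `s` to `s + 1` adds `r` at the `k - r` positions `[sk + r, sk + k)` and subtracts
`k - r` at the `r` positions `[sk + k, sk + k + r)`, and changes nothing else. The gains and the
losses cancel, so the total is unchanged; since all gains precede all losses, every prefix sum of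
the increment is nonnegative. Hence each prefix sum is monotone in `s`, and the total is constant.
-/

open Finset

/-- The nonincreasing outdegree sequence of `F^{s+1}_{n,k}`:
position `i` (0-based) carries the `(i+1)`-st largest outdegree. -/
def dseq (n k r s i : ℕ) : ℕ :=
  if i < s * k then n - 1 - (i / k) * k
  else if i < s * k + r then n - 1 - s * k
  else n - 1 - ((s + (i - s * k - r) / k) * k + r)

theorem sum_range_nonneg_of_sign_change {α : Type*} [AddCommGroup α] [PartialOrder α]
    [IsOrderedAddMonoid α] {f : ℕ → α} {m n t : ℕ} (hpos : ∀ i < m, 0 ≤ f i)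
    (hneg : ∀ i, m ≤ i → f i ≤ 0) (htot : 0 ≤ ∑ i ∈ range n, f i) (ht : t ≤ n) :
    0 ≤ ∑ i ∈ range t, f i := by
  rcases le_or_gt t m with htm | hmt
  · exact sum_nonneg fun i hi => hpos i ((mem_range.mp hi).trans_le htm)
  · have htail : ∑ i ∈ Ico t n, f i ≤ 0 :=
      sum_nonpos fun i hi => hneg i (hmt.le.trans (mem_Ico.mp hi).1)
    rw [← sum_range_add_sum_Ico f ht] at htot
    exact htot.trans (add_le_of_nonpos_right htail)

section

variable {n k q r s : ℕ}

def dseqIncr (k r s i : ℕ) : ℤ :=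
  (if i ∈ Ico (s * k + r) (s * k + k) then (r : ℤ) else 0) +
    (if i ∈ Ico (s * k + k) (s * k + k + r) then (r : ℤ) - k else 0)

theorem dseq_of_lt {i : ℕ} (hi : i < s * k) : dseq n k r s i = n - 1 - i / k * k :=
  if_pos hi

theorem dseq_of_mem_Ico {i : ℕ} (hi₁ : s * k ≤ i) (hi₂ : i < s * k + r) :
    dseq n k r s i = n - 1 - s * k := by
  rw [dseq, if_neg hi₁.not_gt, if_pos hi₂]

theorem dseq_of_le (hk : 0 < k) {i : ℕ} (hi : s * k + r ≤ i) :
    dseq n k r s i = n - 1 - ((i - r) / k * k + r) := by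
  have : i - r = (i - s * k - r) + s * k := by omega
  rw [dseq, if_neg (by omega), if_neg (by omega), this, Nat.add_mul_div_right _ _ hk, add_comm s]

theorem dseq_succ_eq (hk : 0 < k) (hrk : r ≤ k) (hn : (s + 1) * k + r ≤ n) (i : ℕ) :
    (dseq n k r (s + 1) i : ℤ) = dseq n k r s i + dseqIncr k r s i := by
  rw [add_one_mul] at hn
  have hdiv : ∀ j, s * k ≤ j → j < s * k + k → j / k = s := fun j h₁ h₂ =>
    Nat.div_eq_of_lt_le (by linarith) (by linarith)
  obtain hi | ⟨hi₁, hi₂⟩ | ⟨hi₁, hi₂⟩ | ⟨hi₁, hi₂⟩ | hi :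
      i < s * k ∨ (s * k ≤ i ∧ i < s * k + r) ∨ (s * k + r ≤ i ∧ i < s * k + k) ∨
        (s * k + k ≤ i ∧ i < s * k + k + r) ∨ s * k + k + r ≤ i := by omega
  all_goals simp only [dseqIncr, mem_Ico]
  · rw [dseq_of_lt (by linarith), dseq_of_lt hi]
    split_ifs <;> omega
  · rw [dseq_of_lt (by linarith), hdiv i hi₁ (by omega), dseq_of_mem_Ico hi₁ hi₂]
    split_ifs <;> omega
  · rw [dseq_of_lt (by linarith), hdiv i (by omega) hi₂, dseq_of_le hk hi₁,
      hdiv (i - r) (by omega) (by omega)]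
    split_ifs <;> omega
  · rw [dseq_of_mem_Ico (by linarith) (by linarith), dseq_of_le hk (by omega),
      hdiv (i - r) (by omega) (by omega), add_one_mul]
    split_ifs <;> omega
  · rw [dseq_of_le hk (by linarith), dseq_of_le hk (by linarith)]
    split_ifs <;> omega

theorem sum_range_dseqIncr (hrk : r ≤ k) (hn : (s + 1) * k + r ≤ n) :
    ∑ i ∈ range n, dseqIncr k r s i = 0 := by
  rw [add_one_mul] at hn
  have hgain : Ico (s * k + r) (s * k + k) ⊆ range n := fun i hi => by
    simp only [mem_Ico, mem_range] at hi ⊢; omega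
  have hloss : Ico (s * k + k) (s * k + k + r) ⊆ range n := fun i hi => by
    simp only [mem_Ico, mem_range] at hi ⊢; omega
  simp only [dseqIncr, sum_add_distrib, sum_ite_mem, inter_eq_right.mpr hgain,
    inter_eq_right.mpr hloss, sum_const, Nat.card_Ico, nsmul_eq_mul]
  rw [Nat.add_sub_add_left, Nat.add_sub_cancel_left, Nat.cast_sub hrk]
  ring

theorem sum_range_dseq_succ (hk : 0 < k) (hrk : r ≤ k) (hn : (s + 1) * k + r ≤ n) (t : ℕ) :
    ((∑ i ∈ range t, dseq n k r (s + 1) i : ℕ) : ℤ) =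
      (∑ i ∈ range t, dseq n k r s i : ℕ) + ∑ i ∈ range t, dseqIncr k r s i := by
  push_cast
  rw [← sum_add_distrib]
  exact sum_congr rfl fun i _ => dseq_succ_eq hk hrk hn i

theorem sum_range_dseq_le_succ (hk : 0 < k) (hrk : r ≤ k) (hn : (s + 1) * k + r ≤ n) {t : ℕ}
    (ht : t ≤ n) : ∑ i ∈ range t, dseq n k r s i ≤ ∑ i ∈ range t, dseq n k r (s + 1) i := by
  have hincr : 0 ≤ ∑ i ∈ range t, dseqIncr k r s i :=
    sum_range_nonneg_of_sign_change (m := s * k + k)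
      (fun i hi => by simp only [dseqIncr, mem_Ico]; split_ifs <;> omega)
      (fun i hi => by simp only [dseqIncr, mem_Ico]; split_ifs <;> omega)
      (sum_range_dseqIncr hrk hn).ge ht
  have hsum := sum_range_dseq_succ hk hrk hn t
  omega

theorem sum_range_dseq_eq_succ (hk : 0 < k) (hrk : r ≤ k) (hn : (s + 1) * k + r ≤ n) :
    ∑ i ∈ range n, dseq n k r s i = ∑ i ∈ range n, dseq n k r (s + 1) i := by
  have hsum := sum_range_dseq_succ hk hrk hn n
  rw [sum_range_dseqIncr hrk hn, add_zero] at hsum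
  exact_mod_cast hsum.symm

theorem succ_mul_add_le_of_lt (hn : q * k + r ≤ n) (hs : s < q) :
    (s + 1) * k + r ≤ n :=
  (Nat.add_le_add_right (Nat.mul_le_mul_right k hs) r).trans hn

theorem sum_range_dseq_monotoneOn (hk : 0 < k) (hrk : r ≤ k) (hn : q * k + r ≤ n)
    {t : ℕ} (ht : t ≤ n) : MonotoneOn (fun s => ∑ i ∈ range t, dseq n k r s i) (Set.Iic q) :=
  monotoneOn_of_le_succ Set.ordConnected_Iic fun _ _ _ hs =>
    sum_range_dseq_le_succ hk hrk (succ_mul_add_le_of_lt hn hs) ht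

theorem sum_range_dseq_eq_sum_range_dseq_zero (hk : 0 < k) (hrk : r ≤ k)
    (hn : q * k + r ≤ n) (hs : s ≤ q) :
    ∑ i ∈ range n, dseq n k r s i = ∑ i ∈ range n, dseq n k r 0 i := by
  induction s with
  | zero => rfl
  | succ s ih =>
    rw [← ih (by omega)]
    exact (sum_range_dseq_eq_succ hk hrk (succ_mul_add_le_of_lt hn hs)).symm

end

theorem F_majorization_general (n k q r : ℕ) (hk : 1 ≤ k)
    (hqr : n = q * k + r) (hrk : r < k)
    (s₁ s₂ : ℕ) (h21 : s₂ < s₁) (h1q : s₁ ≤ q) :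
    (∀ t, 1 ≤ t → t ≤ n →
      ∑ i ∈ range t, dseq n k r s₂ i ≤ ∑ i ∈ range t, dseq n k r s₁ i) ∧
    ∑ i ∈ range n, dseq n k r s₂ i = ∑ i ∈ range n, dseq n k r s₁ i := by
  have hqk : q * k + r ≤ n := hqr.ge
  have h2q : s₂ ≤ q := h21.le.trans h1q
  refine ⟨fun t _ ht => sum_range_dseq_monotoneOn hk hrk.le hqk ht h2q h1q h21.le, ?_⟩
  rw [sum_range_dseq_eq_sum_range_dseq_zero hk hrk.le hqk h2q,
    sum_range_dseq_eq_sum_range_dseq_zero hk hrk.le hqk h1q]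

theorem F_majorization (n k q r : ℕ) (hn : 1 ≤ n) (hk : 1 ≤ k)
    (hqr : n = q * k + r) (hr0 : 0 < r) (hrk : r < k)
    (s₁ s₂ : ℕ) (h21 : s₂ < s₁) (h1q : s₁ ≤ q) :
    (∀ t, 1 ≤ t → t ≤ n →
      ∑ i ∈ range t, dseq n k r s₂ i ≤ ∑ i ∈ range t, dseq n k r s₁ i) ∧
    ∑ i ∈ range n, dseq n k r s₂ i = ∑ i ∈ range n, dseq n k r s₁ i :=
  F_majorization_general n k q r hk hqr hrk s₁ s₂ h21 h1q
end

section
/- Let k,n ∈ ℕ⁺ with n = qk + r, 0 < r < k. Then LE(F^1_{n,k}) < LE(F^2_{n,k}) < ⋯ < LE(F^{q+1}_{n,k}), where LE(F^{s+1}_{n,k}) = ∑_{i=1}^{s} k(n−1−(i−1)k)² + r(n−1−sk)² + ∑_{i=s+2}^{q+1} k(n−1−(i−2)k−r)² + (q k(k−1) + r(r−1)). -/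
/-!
Moving the `r`-block one step later replaces the block sizes `r, k` at outdegree levels
`a, a - r` by `k, r` at levels `a, a - k`, where `a = n - 1 - sk`; every other block keeps its
outdegree. The energy changes by exactly `rk(k - r) > 0`.
-/

open Finset

/-- Laplacian energy of `F^{s+1}_{n,k}`:
`∑_{i=1}^{s} k(n−1−(i−1)k)² + r(n−1−sk)² + ∑_{i=s+2}^{q+1} k(n−1−(i−2)k−r)²
  + (qk(k−1) + r(r−1))`. -/
def LEF (n k q r s : ℕ) : ℕ :=
  (∑ i ∈ range s, k * (n - 1 - i * k) ^ 2) + r * (n - 1 - s * k) ^ 2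
    + (∑ i ∈ range (q - s), k * (n - 1 - (s + i) * k - r) ^ 2)
    + (q * k * (k - 1) + r * (r - 1))

lemma mul_sq_add_mul_sub_sq_lt {a k r : ℕ} (hr : 0 < r) (hrk : r < k) (hka : k ≤ a) :
    r * a ^ 2 + k * (a - r) ^ 2 < k * a ^ 2 + r * (a - k) ^ 2 := by
  zify [hrk.le.trans hka, hka]
  have hgap : (0 : ℤ) < r * k * (k - r) := by
    have hr' : (0 : ℤ) < r := by exact_mod_cast hr
    have hk' : (0 : ℤ) < k := hr'.trans (by exact_mod_cast hrk)
    exact mul_pos (mul_pos hr' hk') (sub_pos.mpr (by exact_mod_cast hrk))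
  linear_combination hgap

lemma sum_range_succ_add_shift {M : Type*} [AddCommMonoid M] (f : ℕ → M) (s m : ℕ) :
    ∑ i ∈ range (m + 1), f (s + i) = f s + ∑ i ∈ range m, f (s + 1 + i) := by
  rw [sum_range_succ', add_comm]
  simp only [add_zero, add_assoc, add_comm 1]

theorem LEF_strict_mono_general (n k q r : ℕ)
    (hqr : n = q * k + r) (hr0 : 0 < r) (hrk : r < k) :
    ∀ s, s < q → LEF n k q r s < LEF n k q r (s + 1) := by
  intro s hs
  obtain ⟨m, rfl⟩ : ∃ m, q = s + 1 + m := ⟨q - (s + 1), by omega⟩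
  have hlevel : k ≤ n - 1 - s * k := by
    rw [add_mul, add_mul, one_mul] at hqr
    omega
  have hnext : n - 1 - (s + 1) * k = n - 1 - s * k - k := by
    rw [add_mul, one_mul]
    omega
  have hlen : s + 1 + m - s = m + 1 := by omega
  have hlen' : s + 1 + m - (s + 1) = m := by omega
  have key := mul_sq_add_mul_sub_sq_lt hr0 hrk hlevel
  unfold LEF
  rw [hlen, hlen', sum_range_succ_add_shift (fun j => k * (n - 1 - j * k - r) ^ 2),
    sum_range_succ, hnext]
  linarith

theorem LEF_strict_mono (n k q r : ℕ) (hn : 1 ≤ n) (hk : 1 ≤ k)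
    (hqr : n = q * k + r) (hr0 : 0 < r) (hrk : r < k) :
    ∀ s, s < q → LEF n k q r s < LEF n k q r (s + 1) :=
  LEF_strict_mono_general n k q r hqr hr0 hrk
end
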